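/- Let g(θ) = λ₁‖θ‖₂ + λ₂‖θ‖₂² + λ₃|θ₂| on ℝ² with λ₁, λ₂, λ₃ > 0, and let (θ₁*, θ₂*) be the minimizer of (1/2)‖θ − b‖² + g(θ) for b = (b₁, b₂). Then the minimizer is (0,0) if and only if √(b₁² + s(b₂, λ₃)²) ≤ λ₁, where s(b₂, λ₃) = sign(b₂)(|b₂| − λ₃)₊. -/

import Mathlib

/-!
Write `F` for the objective, `s = s(b₂, λ₃)` and `r = √(b₁² + s²)`.

If `r > λ₁`, moving from `0` along the ray `ε (b₁, s)` changes `F` by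
`ε r (ε (1/2 + λ₂) r - (r - λ₁))`, which is negative for small `ε > 0`; the identity
`s b₂ - λ₃ |s| = s²` is what makes the linear term exactly `-ε r²`.

If `r ≤ λ₁`, then `|b₂| ≤ |s| + λ₃` and Cauchy–Schwarz against `(b₁, |s|)` give
`⟨θ, b⟩ ≤ λ₁ ‖θ‖ + λ₃ |θ₂|`, so `F θ - F 0 ≥ (1/2 + λ₂) ‖θ‖²` and only `θ = 0` can
minimize.
-/

noncomputable def softThreshold (b l : ℝ) : ℝ :=
  Real.sign b * max (|b| - l) 0

-- `Real.sign 0 = 0`, so `softThreshold 0 l = 0` even when `l < 0`.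
lemma abs_softThreshold {l : ℝ} (hl : 0 ≤ l) (b : ℝ) :
    |softThreshold b l| = max (|b| - l) 0 := by
  rcases lt_trichotomy b 0 with hb | rfl | hb
  · simp [softThreshold, Real.sign_of_neg hb]
  · simp [softThreshold, hl]
  · simp [softThreshold, Real.sign_of_pos hb]

lemma softThreshold_mul_sub_mul_abs (b l : ℝ) :
    softThreshold b l * b - l * |softThreshold b l| = softThreshold b l ^ 2 := by
  have hm : max (|b| - l) 0 * (|b| - l) = max (|b| - l) 0 ^ 2 := by
    rcases le_total (|b| - l) 0 with h | h <;> simp [h, sq]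
  have hm0 : |max (|b| - l) 0| = max (|b| - l) 0 := abs_of_nonneg (le_max_right _ _)
  rcases lt_trichotomy b 0 with hb | rfl | hb
  · rw [abs_of_neg hb] at hm hm0
    simp only [softThreshold, Real.sign_of_neg hb, abs_of_neg hb, abs_mul, hm0]
    linear_combination hm
  · simp [softThreshold]
  · rw [abs_of_pos hb] at hm hm0
    simp only [softThreshold, Real.sign_of_pos hb, abs_of_pos hb, abs_mul, hm0]
    linear_combination hm

lemma mul_add_mul_le_sqrt_mul_sqrt (a b c d : ℝ) :
    a * c + b * d ≤ √(a ^ 2 + b ^ 2) * √(c ^ 2 + d ^ 2) := by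
  calc a * c + b * d ≤ √((a * c + b * d) ^ 2) := Real.le_sqrt_of_sq_le le_rfl
    _ ≤ √((a ^ 2 + b ^ 2) * (c ^ 2 + d ^ 2)) :=
        Real.sqrt_le_sqrt (by nlinarith [sq_nonneg (a * d - b * c)])
    _ = √(a ^ 2 + b ^ 2) * √(c ^ 2 + d ^ 2) := Real.sqrt_mul (by positivity) _

lemma mul_add_mul_le_sqrt_mul_sqrt_softThreshold (b₁ b₂ θ₁ θ₂ : ℝ) {lam3 : ℝ}
    (hlam3 : 0 ≤ lam3) :
    θ₁ * b₁ + θ₂ * b₂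
      ≤ √(θ₁ ^ 2 + θ₂ ^ 2) * √(b₁ ^ 2 + softThreshold b₂ lam3 ^ 2) + lam3 * |θ₂| := by
  have hb₂ : |b₂| ≤ |softThreshold b₂ lam3| + lam3 := by
    rw [abs_softThreshold hlam3]
    linarith [le_max_left (|b₂| - lam3) 0]
  have hcs := mul_add_mul_le_sqrt_mul_sqrt θ₁ |θ₂| b₁ |softThreshold b₂ lam3|
  rw [sq_abs, sq_abs] at hcs
  have hθ₂b₂ : θ₂ * b₂ ≤ |θ₂| * (|softThreshold b₂ lam3| + lam3) :=
    (le_abs_self _).trans (by rw [abs_mul]; gcongr)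
  linarith

noncomputable def smogObjective (b₁ b₂ lam1 lam2 lam3 t₁ t₂ : ℝ) : ℝ :=
  (1/2) * ((t₁ - b₁) ^ 2 + (t₂ - b₂) ^ 2) + lam1 * √(t₁ ^ 2 + t₂ ^ 2)
    + lam2 * (t₁ ^ 2 + t₂ ^ 2) + lam3 * |t₂|

section

variable {b₁ b₂ lam1 lam2 lam3 : ℝ}

lemma smogObjective_zero :
    smogObjective b₁ b₂ lam1 lam2 lam3 0 0 = (1/2) * (b₁ ^ 2 + b₂ ^ 2) := by
  simp [smogObjective]

lemma smogObjective_smul_softThreshold {ε : ℝ} (hε : 0 ≤ ε) :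
    let r := √(b₁ ^ 2 + softThreshold b₂ lam3 ^ 2)
    smogObjective b₁ b₂ lam1 lam2 lam3 (ε * b₁) (ε * softThreshold b₂ lam3)
      = smogObjective b₁ b₂ lam1 lam2 lam3 0 0
        + ε * r * (ε * (1/2 + lam2) * r - (r - lam1)) := by
  intro r
  set s := softThreshold b₂ lam3
  have hr : r ^ 2 = b₁ ^ 2 + s ^ 2 := Real.sq_sqrt (by positivity)
  have hnorm : √((ε * b₁) ^ 2 + (ε * s) ^ 2) = ε * r := by
    rw [show (ε * b₁) ^ 2 + (ε * s) ^ 2 = ε ^ 2 * (b₁ ^ 2 + s ^ 2) by ring,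
      Real.sqrt_mul (sq_nonneg ε), Real.sqrt_sq hε]
  rw [smogObjective, smogObjective_zero, hnorm, abs_mul, abs_of_nonneg hε]
  linear_combination
    (ε - ε ^ 2 * (1/2 + lam2)) * hr - ε * softThreshold_mul_sub_mul_abs b₂ lam3

theorem sqrt_le_of_forall_smogObjective_zero_le (hlam1 : 0 ≤ lam1)
    (hmin : ∀ t₁ t₂,
      smogObjective b₁ b₂ lam1 lam2 lam3 0 0 ≤ smogObjective b₁ b₂ lam1 lam2 lam3 t₁ t₂) :
    √(b₁ ^ 2 + softThreshold b₂ lam3 ^ 2) ≤ lam1 := by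
  set r := √(b₁ ^ 2 + softThreshold b₂ lam3 ^ 2)
  by_contra! hr
  obtain ⟨ε, hε, hεr⟩ := exists_pos_mul_lt (sub_pos.2 hr) ((1/2 + lam2) * r)
  have hdecrease := hmin (ε * b₁) (ε * softThreshold b₂ lam3)
  rw [smogObjective_smul_softThreshold hε.le] at hdecrease
  have : 0 < ε * r * ((r - lam1) - ε * (1/2 + lam2) * r) :=
    mul_pos (mul_pos hε (hlam1.trans_lt hr)) (by linarith)
  linarith

theorem eq_zero_of_smogObjective_le_smogObjective_zero
    (hlam2 : -(1/2) < lam2) (hlam3 : 0 ≤ lam3)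
    (hb : √(b₁ ^ 2 + softThreshold b₂ lam3 ^ 2) ≤ lam1) {θ₁ θ₂ : ℝ}
    (hle : smogObjective b₁ b₂ lam1 lam2 lam3 θ₁ θ₂
      ≤ smogObjective b₁ b₂ lam1 lam2 lam3 0 0) :
    θ₁ = 0 ∧ θ₂ = 0 := by
  have hinner := mul_add_mul_le_sqrt_mul_sqrt_softThreshold b₁ b₂ θ₁ θ₂ hlam3
  have hnorm : √(θ₁ ^ 2 + θ₂ ^ 2) * √(b₁ ^ 2 + softThreshold b₂ lam3 ^ 2)
      ≤ lam1 * √(θ₁ ^ 2 + θ₂ ^ 2) := by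
    rw [mul_comm]; exact mul_le_mul_of_nonneg_right hb (Real.sqrt_nonneg _)
  rw [smogObjective, smogObjective_zero] at hle
  have hsq : (1/2 + lam2) * (θ₁ ^ 2 + θ₂ ^ 2) ≤ 0 := by nlinarith
  have hzero : θ₁ ^ 2 + θ₂ ^ 2 = 0 :=
    le_antisymm (nonpos_of_mul_nonpos_right hsq (by linarith)) (by positivity)
  constructor <;> nlinarith [sq_nonneg θ₁, sq_nonneg θ₂]

end

/-- The minimizer of the Lemma 1 objective is (0,0) iff
`√(b₁² + s(b₂,λ₃)²) ≤ λ₁`. -/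
theorem group_zero_characterization (b₁ b₂ lam1 lam2 lam3 θ₁ θ₂ : ℝ)
    (h1 : 0 < lam1) (h2 : 0 < lam2) (h3 : 0 < lam3)
    (hmin : ∀ t₁ t₂ : ℝ,
      (1/2) * ((θ₁ - b₁)^2 + (θ₂ - b₂)^2) + lam1 * Real.sqrt (θ₁^2 + θ₂^2)
          + lam2 * (θ₁^2 + θ₂^2) + lam3 * |θ₂|
        ≤ (1/2) * ((t₁ - b₁)^2 + (t₂ - b₂)^2) + lam1 * Real.sqrt (t₁^2 + t₂^2)
          + lam2 * (t₁^2 + t₂^2) + lam3 * |t₂|) :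
    (θ₁ = 0 ∧ θ₂ = 0) ↔
      Real.sqrt (b₁^2 + (Real.sign b₂ * max (|b₂| - lam3) 0)^2) ≤ lam1 := by
  have hF : ∀ t₁ t₂, smogObjective b₁ b₂ lam1 lam2 lam3 θ₁ θ₂
      ≤ smogObjective b₁ b₂ lam1 lam2 lam3 t₁ t₂ := hmin
  constructor
  · rintro ⟨rfl, rfl⟩
    exact sqrt_le_of_forall_smogObjective_zero_le h1.le hF
  · intro hb
    exact eq_zero_of_smogObjective_le_smogObjective_zero (by linarith) h3.le hb (hF 0 0)
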